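/- arXiv:2203.03316 — 3 statements merged into one kernel-verified Lean document; each statement's English description precedes it below -/
import Mathlib

section
/- Let C = [-1,1]² ⊂ ℝ² and V(x) = d(x,C)⁴, the fourth power of the Euclidean distance to C. Then the trajectory y(t) = (2 + e^{-t}, sin t) satisfies ẏ_i(t) · (∂V/∂x_i)(y(t)) ≤ 0 for i = 1,2 and all t ≥ 0, but y does not converge. -/
/-!
The whole trajectory lies in `(1, ∞) × [-1, 1]`. Near a point `x` of that region, `d(·, C)` is
squeezed between `z₀ - 1` (as `C` lies in the half-plane `z₀ ≤ 1`) and the distance to the point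
`(1, x₁)` of `C`. The fourth powers of both bounds agree at `x` and have gradient `(4(x₀ - 1)³, 0)`
there, hence so does `V`. Thus `∂₀V > 0` while `y₀` decreases, `∂₁V = 0`, and `y₁ = sin` has no limit.
-/

open Filter Topology Asymptotics Metric Set

local notation "ℝ²" => EuclideanSpace ℝ (Fin 2)

theorem HasFDerivAt.of_squeeze {E : Type*} [NormedAddCommGroup E] [NormedSpace ℝ E]
    {f g h : E → ℝ} {f' : E →L[ℝ] ℝ} {x : E} (hf : HasFDerivAt f f' x) (hh : HasFDerivAt h f' x)
    (hfg : ∀ᶠ z in 𝓝 x, f z ≤ g z) (hgh : ∀ᶠ z in 𝓝 x, g z ≤ h z) (hfh : f x = h x) :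
    HasFDerivAt g f' x := by
  have hgx : g x = f x := le_antisymm (hfh ▸ hgh.self_of_nhds) hfg.self_of_nhds
  refine .of_isLittleO <| IsBigO.trans_isLittleO (.of_bound' ?_)
    (hf.isLittleO.norm_left.add hh.isLittleO.norm_left)
  filter_upwards [hfg, hgh] with z hfz hgz
  set ef := f z - f x - f' (z - x)
  set eh := h z - h x - f' (z - x)
  have hg : |g z - g x - f' (z - x)| ≤ |ef| + |eh| :=
    abs_le.mpr ⟨by linarith [neg_abs_le ef, abs_nonneg eh], by linarith [le_abs_self eh, abs_nonneg ef]⟩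
  simpa only [Real.norm_eq_abs, abs_of_nonneg (add_nonneg (abs_nonneg ef) (abs_nonneg eh))] using hg

theorem Function.Periodic.not_tendsto_atTop {α : Type*} [TopologicalSpace α] [T2Space α]
    {f : ℝ → α} {c : ℝ} (hf : Periodic f c) (hc : 0 < c) {a b : ℝ} (hab : f a ≠ f b) (L : α) :
    ¬ Tendsto f atTop (𝓝 L) := by
  intro hL
  have hconst (a : ℝ) : f a = L := by
    have hshift : Tendsto (fun n : ℕ => a + n * c) atTop atTop :=
      tendsto_atTop_add_const_left _ _ (tendsto_natCast_atTop_atTop.atTop_mul_const hc)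
    have := hL.comp hshift
    simp only [Function.comp_def, fun n : ℕ => hf.nat_mul n a] at this
    exact tendsto_const_nhds_iff.mp this
  exact hab ((hconst a).trans (hconst b).symm)

def unitSquare : Set ℝ² := {x | x 0 ∈ Icc (-1 : ℝ) 1 ∧ x 1 ∈ Icc (-1 : ℝ) 1}

theorem sub_one_le_infDist_unitSquare (z : ℝ²) : z 0 - 1 ≤ infDist z unitSquare := by
  refine (le_infDist ⟨0, by norm_num [unitSquare]⟩).2 fun c hc => ?_
  calc z 0 - 1 ≤ dist (z 0) (c 0) := by
        rw [Real.dist_eq]; linarith [le_abs_self (z 0 - c 0), hc.1.2]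
    _ ≤ dist z c := PiLp.dist_apply_le z c 0

theorem infDist_unitSquare_sq_le {w : ℝ} (hw : w ∈ Icc (-1 : ℝ) 1) (z : ℝ²) :
    infDist z unitSquare ^ 2 ≤ (z 0 - 1) ^ 2 + (z 1 - w) ^ 2 := by
  have hmem : !₂[1, w] ∈ unitSquare := ⟨by norm_num, by simpa using hw⟩
  calc infDist z unitSquare ^ 2 ≤ dist z !₂[1, w] ^ 2 :=
        pow_le_pow_left₀ infDist_nonneg (infDist_le_dist_of_mem hmem) 2
    _ = (z 0 - 1) ^ 2 + (z 1 - w) ^ 2 := by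
        simp only [EuclideanSpace.dist_eq, Fin.sum_univ_two, Real.dist_eq, sq_abs]
        simp only [Matrix.cons_val_zero, Matrix.cons_val_one]
        exact Real.sq_sqrt (by positivity)

theorem hasFDerivAt_sub_one_pow_four (x : ℝ²) :
    HasFDerivAt (fun z : ℝ² => (z 0 - 1) ^ 4)
      ((4 * (x 0 - 1) ^ 3) • EuclideanSpace.proj (𝕜 := ℝ) 0) x := by
  refine ((hasDerivAt_pow 4 (x 0 - 1)).comp_hasFDerivAt x
    ((EuclideanSpace.proj (𝕜 := ℝ) (0 : Fin 2)).hasFDerivAt.sub_const 1)).congr_fderiv ?_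
  norm_num

theorem hasFDerivAt_sub_one_sq_add_sub_sq_sq (x : ℝ²) :
    HasFDerivAt (fun z : ℝ² => ((z 0 - 1) ^ 2 + (z 1 - x 1) ^ 2) ^ 2)
      ((4 * (x 0 - 1) ^ 3) • EuclideanSpace.proj (𝕜 := ℝ) 0) x := by
  have h0 := (hasDerivAt_pow 2 (x 0 - 1)).comp_hasFDerivAt x
    ((EuclideanSpace.proj (𝕜 := ℝ) (0 : Fin 2)).hasFDerivAt.sub_const 1)
  have h1 := (hasDerivAt_pow 2 (x 1 - x 1)).comp_hasFDerivAt x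
    ((EuclideanSpace.proj (𝕜 := ℝ) (1 : Fin 2)).hasFDerivAt.sub_const (x 1))
  refine ((hasDerivAt_pow 2 _).comp_hasFDerivAt x (h0.add h1)).congr_fderiv ?_
  ext v
  simp
  ring

theorem hasFDerivAt_infDist_unitSquare_pow_four {x : ℝ²} (hx0 : 1 < x 0)
    (hx1 : x 1 ∈ Icc (-1 : ℝ) 1) :
    HasFDerivAt (fun z => infDist z unitSquare ^ 4)
      ((4 * (x 0 - 1) ^ 3) • EuclideanSpace.proj (𝕜 := ℝ) 0) x := by
  refine (hasFDerivAt_sub_one_pow_four x).of_squeeze (hasFDerivAt_sub_one_sq_add_sub_sq_sq x)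
    ?_ ?_ (by simp [← pow_mul])
  · filter_upwards
      [((EuclideanSpace.proj (𝕜 := ℝ) 0).continuous.tendsto x).eventually_const_le hx0] with z hz
    exact pow_le_pow_left₀ (by simpa using hz) (sub_one_le_infDist_unitSquare z) 4
  · refine .of_forall fun z => ?_
    simpa [← pow_mul] using pow_le_pow_left₀ (sq_nonneg _) (infDist_unitSquare_sq_le hx1 z) 2

/-- For `V(x) = d(x, [-1,1]²)⁴` the trajectory `y(t) = (2 + e^{-t}, sin t)` satisfies
the coordinate-wise decrease condition but does not converge. -/
theorem example_coordinatewise_decrease_no_convergence :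
    let C : Set (EuclideanSpace ℝ (Fin 2)) :=
      {x | x 0 ∈ Set.Icc (-1 : ℝ) 1 ∧ x 1 ∈ Set.Icc (-1 : ℝ) 1}
    let V : EuclideanSpace ℝ (Fin 2) → ℝ := fun x => (Metric.infDist x C) ^ 4
    let y : ℝ → EuclideanSpace ℝ (Fin 2) := fun t =>
      (WithLp.equiv 2 (Fin 2 → ℝ)).symm ![2 + Real.exp (-t), Real.sin t]
    (∀ t : ℝ, 0 ≤ t → ∀ i : Fin 2,
        deriv (fun s => y s i) t * fderiv ℝ V (y t) (EuclideanSpace.single i 1) ≤ 0) ∧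
      ¬ ∃ L : EuclideanSpace ℝ (Fin 2), Tendsto y atTop (𝓝 L) := by
  intro C V y
  have hV (t : ℝ) :
      HasFDerivAt V ((4 * (1 + Real.exp (-t)) ^ 3) • EuclideanSpace.proj (𝕜 := ℝ) 0) (y t) := by
    have hy0 : y t 0 - 1 = 1 + Real.exp (-t) := by simp [y]; ring
    rw [← hy0]
    exact hasFDerivAt_infDist_unitSquare_pow_four (by linarith [Real.exp_pos (-t)])
      ⟨Real.neg_one_le_sin t, Real.sin_le_one t⟩
  refine ⟨fun t _ i => ?_, fun ⟨L, hL⟩ => ?_⟩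
  · rw [(hV t).fderiv]
    fin_cases i
    · have hderiv : deriv (fun s => y s 0) t = -Real.exp (-t) := by
        simpa [y, Function.comp_def] using ((Real.hasDerivAt_exp _).comp t (hasDerivAt_neg t)).deriv
      simp [hderiv]
      positivity
    · simp
  · exact Real.sin_periodic.not_tendsto_atTop Real.two_pi_pos (a := 0) (b := Real.pi / 2)
      (by simp) (L 1) (((EuclideanSpace.proj 1).continuous.tendsto L).comp hL)
end

section
/- Let G be a connected graph on n vertices, and for each edge let f_{ij} : ℝ → ℝ be nonnegative, with f_{ij}(z) → ∞ as |z| → ∞. Define V(x) = ∑_i ∑_{j∼i} f_{ij}(x_j - x_i). Then the restriction of V to the hyperplane {x : ∑_i x_i = 0} is coercive: V(x) → ∞ as ‖x‖ → ∞ within that hyperplane; consequently V attains a global minimum on ℝⁿ. -/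
/-!
A vector on the hyperplane `∑ xᵢ = 0` that is large in norm has a large coordinate, hence two
coordinates that are far apart; along a path of length at most `n - 1` joining them, some edge
`(i, j)` carries a difference `|x_j - x_i|` of at least `1/(n - 1)` of that gap, and the single
term `f_{ij}(x_j - x_i) ≤ V(x)` is then large. Since `V` is invariant under adding a constant
vector, a minimiser of `V` on the hyperplane, which exists by coercivity, is a global one.
-/

open Filter Bornology

namespace SimpleGraph

variable {V : Type*} {G : SimpleGraph V}

theorem Walk.abs_sub_le_length_mul (x : V → ℝ) {c : ℝ} (h : ∀ a b, G.Adj a b → |x a - x b| ≤ c)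
    {u v : V} (p : G.Walk u v) : |x u - x v| ≤ p.length * c := by
  induction p with
  | nil => simp
  | @cons a b _ hab p ih =>
    calc |x a - x _| ≤ |x a - x b| + |x b - x _| := abs_sub_le _ _ _
      _ ≤ c + p.length * c := add_le_add (h a b hab) ih
      _ = (p.cons hab).length * c := by rw [Walk.length_cons]; push_cast; ring

theorem Connected.abs_sub_le [Fintype V] (hG : G.Connected) (x : V → ℝ) {c : ℝ} (hc : 0 ≤ c)
    (h : ∀ a b, G.Adj a b → |x a - x b| ≤ c) (u v : V) :
    |x u - x v| ≤ (Fintype.card V - 1) * c := by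
  classical
  obtain ⟨p⟩ := hG.preconnected u v
  have hlen : (p.toPath.1.length : ℝ) ≤ Fintype.card V - 1 := by
    rw [le_sub_iff_add_le]
    exact_mod_cast p.toPath.2.length_lt
  calc |x u - x v| ≤ p.toPath.1.length * c := p.toPath.1.abs_sub_le_length_mul x h
    _ ≤ (Fintype.card V - 1) * c := mul_le_mul_of_nonneg_right hlen hc

end SimpleGraph

section ZeroSum

variable {ι : Type*} [Fintype ι]

theorem abs_le_of_sum_eq_zero {x : ι → ℝ} (hx : ∑ i, x i = 0) {d : ℝ}
    (h : ∀ k l, |x k - x l| ≤ d) (k : ι) : |x k| ≤ d := by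
  have hcard : (0 : ℝ) < Fintype.card ι := by exact_mod_cast Fintype.card_pos_iff.2 ⟨k⟩
  refine le_of_mul_le_mul_left ?_ hcard
  calc (Fintype.card ι : ℝ) * |x k| = |∑ l, (x k - x l)| := by
        rw [Finset.sum_sub_distrib, hx, sub_zero, Finset.sum_const, Finset.card_univ,
          nsmul_eq_mul, abs_mul, Nat.abs_cast]
    _ ≤ ∑ l, |x k - x l| := Finset.abs_sum_le_sum_abs _ _
    _ ≤ ∑ _l : ι, d := Finset.sum_le_sum fun l _ => h k l
    _ = Fintype.card ι * d := by rw [Finset.sum_const, Finset.card_univ, nsmul_eq_mul]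

theorem EuclideanSpace.norm_le_sqrt_card_mul {x : EuclideanSpace ℝ ι} {d : ℝ} (hd : 0 ≤ d)
    (h : ∀ i, |x i| ≤ d) : ‖x‖ ≤ √(Fintype.card ι) * d := by
  rw [EuclideanSpace.norm_eq]
  calc √(∑ i, ‖x i‖ ^ 2) ≤ √(∑ _i : ι, d ^ 2) := by
        gcongr with i
        rw [Real.norm_eq_abs]
        exact h i
    _ = √(Fintype.card ι) * d := by
      rw [Finset.sum_const, Finset.card_univ, nsmul_eq_mul, Real.sqrt_mul (Nat.cast_nonneg _),
        Real.sqrt_sq hd]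

theorem SimpleGraph.Connected.exists_adj_le_abs_sub {G : SimpleGraph ι} (hG : G.Connected)
    {x : EuclideanSpace ℝ ι} (hx : ∑ i, x i = 0) {r : ℝ} (hr : 0 ≤ r)
    (hnorm : √(Fintype.card ι) * ((Fintype.card ι - 1) * r) < ‖x‖) :
    ∃ i j, G.Adj i j ∧ r ≤ |x j - x i| := by
  by_contra! hsmall
  have hedge : ∀ a b, G.Adj a b → |x a - x b| ≤ r := fun a b hab => by
    rw [abs_sub_comm]
    exact (hsmall a b hab).le
  have hcard : (1 : ℝ) ≤ Fintype.card ι := by exact_mod_cast Fintype.card_pos_iff.2 hG.nonempty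
  have hcoord := abs_le_of_sum_eq_zero hx (hG.abs_sub_le x.ofLp hr hedge)
  exact hnorm.not_ge
    (EuclideanSpace.norm_le_sqrt_card_mul (mul_nonneg (sub_nonneg.2 hcard) hr) hcoord)

end ZeroSum

section Energy

variable {ι : Type*} [Fintype ι]

def graphEnergy (G : SimpleGraph ι) [DecidableRel G.Adj] (f : ι → ι → ℝ → ℝ) (x : ι → ℝ) : ℝ :=
  ∑ i, ∑ j ∈ G.neighborFinset i, f i j (x j - x i)

variable {G : SimpleGraph ι} {f : ι → ι → ℝ → ℝ}

theorem exists_forall_lt_of_tendsto_cocompact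
    (hf : ∀ i j, G.Adj i j → Tendsto (f i j) (cocompact ℝ) atTop) (M : ℝ) :
    ∃ r, 0 ≤ r ∧ ∀ z : ℝ, r ≤ |z| → ∀ i j, G.Adj i j → M < f i j z := by
  have hev : ∀ᶠ z in cobounded ℝ, ∀ i j, G.Adj i j → M < f i j z := by
    simp only [Metric.cobounded_eq_cocompact, eventually_all]
    exact fun i j hij => (hf i j hij).eventually_gt_atTop M
  obtain ⟨r, -, hr⟩ := hasBasis_cobounded_norm.eventually_iff.1 hev
  exact ⟨max r 0, le_max_right r 0, fun z hz => hr ((le_max_left r 0).trans hz)⟩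

variable [DecidableRel G.Adj]

theorem graphEnergy_sub_const (x : ι → ℝ) (c : ℝ) :
    graphEnergy G f (fun i => x i - c) = graphEnergy G f x := by
  simp only [graphEnergy, sub_sub_sub_cancel_right]

theorem continuous_graphEnergy (hf : ∀ i j, Continuous (f i j)) :
    Continuous (graphEnergy G f) :=
  continuous_finsetSum _ fun i _ => continuous_finsetSum _ fun j _ =>
    (hf i j).comp ((continuous_apply j).sub (continuous_apply i))

theorem le_graphEnergy (hf : ∀ i j z, 0 ≤ f i j z) {i j : ι} (hij : G.Adj i j) (x : ι → ℝ) :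
    f i j (x j - x i) ≤ graphEnergy G f x :=
  calc f i j (x j - x i) ≤ ∑ j' ∈ G.neighborFinset i, f i j' (x j' - x i) :=
        Finset.single_le_sum (f := fun j' => f i j' (x j' - x i)) (fun j' _ => hf i j' _)
          ((G.mem_neighborFinset i j).2 hij)
    _ ≤ graphEnergy G f x :=
        Finset.single_le_sum (f := fun i => ∑ j ∈ G.neighborFinset i, f i j (x j - x i))
          (fun i' _ => Finset.sum_nonneg fun j' _ => hf i' j' _) (Finset.mem_univ i)

theorem SimpleGraph.Connected.exists_lt_graphEnergy (hG : G.Connected)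
    (hf₀ : ∀ i j z, 0 ≤ f i j z) (hf : ∀ i j, G.Adj i j → Tendsto (f i j) (cocompact ℝ) atTop)
    (M : ℝ) : ∃ R : ℝ, ∀ x : EuclideanSpace ℝ ι,
      ∑ i, x i = 0 → R ≤ ‖x‖ → M < graphEnergy G f x.ofLp := by
  obtain ⟨r, hr, hlarge⟩ := exists_forall_lt_of_tendsto_cocompact hf M
  refine ⟨√(Fintype.card ι) * ((Fintype.card ι - 1) * r) + 1, fun x hx hR => ?_⟩
  obtain ⟨i, j, hij, hrij⟩ := hG.exists_adj_le_abs_sub hx hr (by linarith)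
  exact (hlarge _ hrij i j hij).trans_le (le_graphEnergy hf₀ hij x.ofLp)

theorem SimpleGraph.Connected.exists_forall_graphEnergy_le (hG : G.Connected)
    (hcont : ∀ i j, Continuous (f i j)) (hf₀ : ∀ i j z, 0 ≤ f i j z)
    (hf : ∀ i j, G.Adj i j → Tendsto (f i j) (cocompact ℝ) atTop) :
    ∃ xstar : EuclideanSpace ℝ ι, ∀ x : EuclideanSpace ℝ ι,
      graphEnergy G f xstar.ofLp ≤ graphEnergy G f x.ofLp := by
  set S := {y : EuclideanSpace ℝ ι | ∑ i, y i = 0}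
  have hS : IsClosed S := isClosed_eq (by fun_prop) continuous_const
  have hcontE : Continuous fun y : EuclideanSpace ℝ ι => graphEnergy G f y.ofLp :=
    (continuous_graphEnergy hcont).comp (PiLp.continuous_ofLp 2 _)
  obtain ⟨R, hR⟩ := hG.exists_lt_graphEnergy hf₀ hf (graphEnergy G f 0)
  have hfar : ∀ᶠ y in cocompact _ ⊓ 𝓟 S, graphEnergy G f (0 : EuclideanSpace ℝ ι).ofLp ≤
      graphEnergy G f y.ofLp := by
    rw [eventually_inf_principal]
    filter_upwards [tendsto_norm_cocompact_atTop.eventually_ge_atTop R] with y hy hyS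
    exact (hR y hyS hy).le
  obtain ⟨xstar, -, hmin⟩ := hcontE.continuousOn.exists_isMinOn' hS (by simp [S]) hfar
  refine ⟨xstar, fun x => ?_⟩
  have : Nonempty ι := hG.nonempty
  set y : EuclideanSpace ℝ ι := WithLp.toLp 2 fun i => x i - (∑ j, x j) / Fintype.card ι
  have hyS : y ∈ S := show ∑ i, (x i - (∑ j, x j) / Fintype.card ι) = 0 by
    rw [Finset.sum_sub_distrib, Finset.sum_const, Finset.card_univ, nsmul_eq_mul,
      mul_div_cancel₀ _ (by positivity), sub_self]
  exact (hmin hyS).trans_eq (graphEnergy_sub_const x.ofLp _)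

end Energy

/-- For nonnegative coercive edge potentials on a connected graph, the energy
`V(x) = ∑ᵢ ∑_{j∼i} f_{ij}(x_j - x_i)` is coercive on the hyperplane `∑ xᵢ = 0`, and
consequently `V` attains a global minimum on `ℝⁿ`. -/
theorem graph_energy_coercive (n : ℕ) (G : SimpleGraph (Fin n)) [DecidableRel G.Adj]
    (hG : G.Connected) (f : Fin n → Fin n → ℝ → ℝ)
    (hcont : ∀ i j, Continuous (f i j))
    (hnonneg : ∀ i j z, 0 ≤ f i j z)
    (hcoer : ∀ i j, G.Adj i j → Tendsto (f i j) (cocompact ℝ) atTop) :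
    let V : EuclideanSpace ℝ (Fin n) → ℝ := fun x =>
      ∑ i : Fin n, ∑ j ∈ G.neighborFinset i, f i j (x j - x i)
    (∀ M : ℝ, ∃ R : ℝ, ∀ x : EuclideanSpace ℝ (Fin n),
        (∑ i, x i) = 0 → R ≤ ‖x‖ → M < V x) ∧
      ∃ xstar : EuclideanSpace ℝ (Fin n), ∀ x, V xstar ≤ V x :=
  ⟨hG.exists_lt_graphEnergy hnonneg hcoer, hG.exists_forall_graphEnergy_le hcont hnonneg hcoer⟩
end

section
/- Let V : ℝⁿ → ℝ be continuously differentiable and y absolutely continuous on [0,∞) with ẏ_i(t)(∂V/∂x_i)(y(t)) ≤ 0 for all i a.e., and suppose |(∂V/∂x_i)(y(t))| ≥ c > 0 for all t in an interval [t₁, t₂] for some fixed coordinate i. Then |y_i(t₂) - y_i(t₁)| ≤ (1/c)(V(y(t₁)) - V(y(t₂))). -/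
open MeasureTheory Set Filter

/-! `V ∘ y` is absolutely continuous, being a locally Lipschitz function of an absolutely
continuous curve, so `V (y t₂) - V (y t₁)` is the integral of its a.e. derivative
`∑ⱼ y'ⱼ ∂ⱼV(y)`. Every term of that sum is nonpositive and the `i`-th one is at most `-c |y'ᵢ|`,
hence `c ∫ |y'ᵢ| ≤ V (y t₁) - V (y t₂)`, while `|yᵢ(t₂) - yᵢ(t₁)| ≤ ∫ |y'ᵢ|`. -/

theorem AbsolutelyContinuousOnInterval.congr {X : Type*} [PseudoMetricSpace X] {f g : ℝ → X}
    {a b : ℝ} (hf : AbsolutelyContinuousOnInterval f a b) (hfg : EqOn f g (uIcc a b)) :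
    AbsolutelyContinuousOnInterval g a b := by
  refine hf.congr' (eventually_inf_principal.mpr (Eventually.of_forall fun E hE => ?_))
  exact Finset.sum_congr rfl fun i hi => by
    rw [hfg (hE.1 i hi).1, hfg (hE.1 i hi).2]

theorem AbsolutelyContinuousOnInterval.pi {ι : Type*} [Fintype ι] {X : ι → Type*}
    [∀ i, PseudoMetricSpace (X i)] {f : ℝ → ∀ i, X i} {a b : ℝ}
    (hf : ∀ i, AbsolutelyContinuousOnInterval (fun x => f x i) a b) :
    AbsolutelyContinuousOnInterval f a b := by
  refine squeeze_zero (fun E => Finset.sum_nonneg fun _ _ => dist_nonneg) (fun E => ?_)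
    (by simpa using tendsto_finsetSum Finset.univ fun i _ => hf i)
  rw [Finset.sum_comm]
  refine Finset.sum_le_sum fun k _ => (dist_pi_le_iff (by positivity)).2 fun i => ?_
  exact Finset.single_le_sum (f := fun i => dist (f (E.2 k).1 i) (f (E.2 k).2 i))
    (fun _ _ => dist_nonneg) (Finset.mem_univ i)

theorem LocallyLipschitz.comp_absolutelyContinuousOnInterval {X Y : Type*}
    [SeminormedAddCommGroup X] [PseudoMetricSpace Y] {g : X → Y} {f : ℝ → X} {a b : ℝ}
    (hg : LocallyLipschitz g)    (hf : AbsolutelyContinuousOnInterval f a b) :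
    AbsolutelyContinuousOnInterval (g ∘ f) a b := by
  have hcpt : IsCompact (f '' uIcc a b) := isCompact_uIcc.image_of_continuousOn hf.continuousOn
  obtain ⟨K, hK⟩ := hg.locallyLipschitzOn.exists_lipschitzOnWith_of_compact hcpt
  refine squeeze_zero' (Eventually.of_forall fun E => Finset.sum_nonneg fun _ _ => dist_nonneg)
    (eventually_inf_principal.mpr (Eventually.of_forall fun E hE => ?_))
    (by simpa using Tendsto.const_mul (K : ℝ) hf)
  rw [Finset.mul_sum]
  exact Finset.sum_le_sum fun k hk =>
    hK.dist_le_mul _ (mem_image_of_mem f (hE.1 k hk).1) _ (mem_image_of_mem f (hE.1 k hk).2)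

theorem EuclideanSpace.absolutelyContinuousOnInterval_of_forall_apply {ι : Type*} [Fintype ι]
    {f : ℝ → EuclideanSpace ℝ ι} {a b : ℝ}
    (hf : ∀ i, AbsolutelyContinuousOnInterval (fun t => f t i) a b) :
    AbsolutelyContinuousOnInterval f a b :=
  (PiLp.lipschitzWith_toLp 2 fun _ : ι => ℝ).locallyLipschitz.comp_absolutelyContinuousOnInterval
    (f := fun t => WithLp.ofLp (f t)) (AbsolutelyContinuousOnInterval.pi hf)

theorem AbsolutelyContinuousOnInterval.sub_le_integral_of_ae_deriv_le {f g : ℝ → ℝ} {a b : ℝ}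
    (hf : AbsolutelyContinuousOnInterval f a b) (hab : a ≤ b)
    (hg : IntervalIntegrable g volume a b)
    (hfg : ∀ᵐ t ∂volume.restrict (Icc a b), deriv f t ≤ g t) :
    f b - f a ≤ ∫ t in a..b, g t := by
  rw [← hf.integral_deriv_eq_sub]
  exact intervalIntegral.integral_mono_ae_restrict hab hf.intervalIntegrable_deriv hg hfg

theorem absolutelyContinuousOnInterval_of_sub_eq_integral {f f' : ℝ → ℝ} {a b : ℝ} (hab : a ≤ b)
    (hf' : IntervalIntegrable f' volume a b) (hf : ∀ t ∈ Icc a b, f t - f a = ∫ u in a..t, f' u) :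
    AbsolutelyContinuousOnInterval f a b := by
  have hint := hf'.absolutelyContinuousOnInterval_intervalIntegral left_mem_uIcc
  refine ((contDiffOn_const (c := f a)).absolutelyContinuousOnInterval.fun_add hint).congr ?_
  intro t ht
  rw [uIcc_of_le hab] at ht
  simp only
  linarith [hf t ht]

theorem ae_hasDerivAt_of_sub_eq_integral {f f' : ℝ → ℝ} {a b : ℝ}
    (hf' : IntervalIntegrable f' volume a b) (hf : ∀ t ∈ Icc a b, f t - f a = ∫ u in a..t, f' u) :
    ∀ᵐ t, t ∈ Ioo a b → HasDerivAt f (f' t) t := by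
  filter_upwards [hf'.ae_hasDerivAt_integral] with t ht htab
  have hint := ht (Icc_subset_uIcc (Ioo_subset_Icc_self htab)) a left_mem_uIcc
  refine (hint.const_add (f a)).congr_of_eventuallyEq
    (eventually_of_mem (Ioo_mem_nhds htab.1 htab.2) fun s hs => ?_)
  linarith [hf s (Ioo_subset_Icc_self hs)]

theorem hasDerivAt_euclidean {ι : Type*} [Fintype ι] {f : ℝ → EuclideanSpace ℝ ι}
    {f' : EuclideanSpace ℝ ι} {x : ℝ} :
    HasDerivAt f f' x ↔ ∀ i, HasDerivAt (fun t => f t i) (f' i) x := by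
  simp only [hasDerivAt_iff_hasFDerivAt, ← hasFDerivWithinAt_univ, hasFDerivWithinAt_piLp]
  rfl

theorem map_euclideanSpace_eq_sum_single {ι F M : Type*} [Fintype ι] [DecidableEq ι]
    [AddCommMonoid M] [Module ℝ M] [FunLike F (EuclideanSpace ℝ ι) M]
    [LinearMapClass F ℝ (EuclideanSpace ℝ ι) M] (L : F) (v : EuclideanSpace ℝ ι) :
    L v = ∑ j, v j • L (EuclideanSpace.single j 1) := by
  conv_lhs => rw [← (EuclideanSpace.basisFun ι ℝ).sum_repr v]
  simp [map_sum, map_smul]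

theorem mul_abs_le_neg_sum_of_forall_mul_nonpos {ι : Type*} {s : Finset ι} {a b : ι → ℝ}
    (h : ∀ j ∈ s, a j * b j ≤ 0) {i : ι} (hi : i ∈ s) {c : ℝ} (hc : c ≤ |b i|) :
    c * |a i| ≤ -∑ j ∈ s, a j * b j := by
  have hsingle : -(a i * b i) ≤ ∑ j ∈ s, -(a j * b j) :=
    Finset.single_le_sum (f := fun j => -(a j * b j)) (fun j hj => neg_nonneg.2 (h j hj)) hi
  calc c * |a i| ≤ |b i| * |a i| := mul_le_mul_of_nonneg_right hc (abs_nonneg _)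
    _ = -(a i * b i) := by rw [mul_comm, ← abs_mul, abs_of_nonpos (h i hi)]
    _ ≤ -∑ j ∈ s, a j * b j := by rwa [Finset.sum_neg_distrib] at hsingle

theorem coordinate_displacement_bound_general (n : ℕ) (V : EuclideanSpace ℝ (Fin n) → ℝ)
    (hV : ContDiff ℝ 1 V)
    (y y' : ℝ → EuclideanSpace ℝ (Fin n))
    (t₁ t₂ : ℝ) (ht : t₁ ≤ t₂)
    (hInt : ∀ j : Fin n, IntervalIntegrable (fun u => y' u j) volume t₁ t₂)
    (hAC : ∀ s t : ℝ, t₁ ≤ s → s ≤ t → t ≤ t₂ → ∀ j : Fin n,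
      y t j - y s j = ∫ u in s..t, y' u j)
    (hdecr : ∀ᵐ t ∂(volume.restrict (Set.Icc t₁ t₂)),
      ∀ j : Fin n, y' t j * fderiv ℝ V (y t) (EuclideanSpace.single j 1) ≤ 0)
    (i : Fin n) (c : ℝ) (hc : 0 < c)
    (hgrad : ∀ t ∈ Set.Icc t₁ t₂,
      c ≤ |fderiv ℝ V (y t) (EuclideanSpace.single i 1)|) :
    |y t₂ i - y t₁ i| ≤ (1 / c) * (V (y t₁) - V (y t₂)) := by
  have hy : ∀ j, ∀ t ∈ Icc t₁ t₂, y t j - y t₁ j = ∫ u in t₁..t, y' u j :=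
    fun j t ht => hAC t₁ t le_rfl ht.1 ht.2 j
  have hVy : AbsolutelyContinuousOnInterval (V ∘ y) t₁ t₂ :=
    hV.locallyLipschitz.comp_absolutelyContinuousOnInterval
      (EuclideanSpace.absolutelyContinuousOnInterval_of_forall_apply fun j =>
        absolutelyContinuousOnInterval_of_sub_eq_integral ht (hInt j) (hy j))
  have hy' : ∀ᵐ t ∂volume.restrict (Icc t₁ t₂), HasDerivAt y (y' t) t := by
    rw [Measure.restrict_congr_set Ioo_ae_eq_Icc.symm]
    filter_upwards [ae_restrict_of_ae <|
      ae_all_iff.2 fun j => ae_hasDerivAt_of_sub_eq_integral (hInt j) (hy j),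
      ae_restrict_mem measurableSet_Ioo] with t hderiv ht
    exact hasDerivAt_euclidean.2 fun j => hderiv j ht
  have hdissip : ∀ᵐ t ∂volume.restrict (Icc t₁ t₂), deriv (V ∘ y) t ≤ -c * |y' t i| := by
    filter_upwards [hy', hdecr, ae_restrict_mem measurableSet_Icc] with t hderiv hdecr_t ht
    rw [((hV.differentiable one_ne_zero _).hasFDerivAt.comp_hasDerivAt t hderiv).deriv,
      map_euclideanSpace_eq_sum_single]
    simp only [smul_eq_mul]
    linarith [mul_abs_le_neg_sum_of_forall_mul_nonpos (fun j _ => hdecr_t j)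
      (Finset.mem_univ i) (hgrad t ht)]
  have henergy := hVy.sub_le_integral_of_ae_deriv_le ht ((hInt i).abs.const_mul (-c)) hdissip
  rw [intervalIntegral.integral_const_mul, Function.comp_apply, Function.comp_apply] at henergy
  calc |y t₂ i - y t₁ i| = |∫ u in t₁..t₂, y' u i| := by rw [hy i t₂ ⟨ht, le_rfl⟩]
    _ ≤ ∫ u in t₁..t₂, |y' u i| := intervalIntegral.abs_integral_le_integral_abs ht
    _ ≤ (1 / c) * (V (y t₁) - V (y t₂)) := by
      rw [one_div, inv_mul_eq_div, le_div_iff₀ hc]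
      linarith

/-- If along a coordinate-wise decreasing trajectory the `i`-th partial derivative of
`V` stays bounded away from zero in absolute value by `c > 0` on `[t₁, t₂]`, then the
`i`-th coordinate moves at most `(1/c)(V(y(t₁)) - V(y(t₂)))`. -/
theorem coordinate_displacement_bound (n : ℕ) (V : EuclideanSpace ℝ (Fin n) → ℝ)
    (hV : ContDiff ℝ 1 V)
    (y y' : ℝ → EuclideanSpace ℝ (Fin n)) (hy : Continuous y)
    (t₁ t₂ : ℝ) (ht₀ : 0 ≤ t₁) (ht : t₁ ≤ t₂)
    (hInt : ∀ j : Fin n, IntervalIntegrable (fun u => y' u j) volume t₁ t₂)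
    (hAC : ∀ s t : ℝ, t₁ ≤ s → s ≤ t → t ≤ t₂ → ∀ j : Fin n,
      y t j - y s j = ∫ u in s..t, y' u j)
    (hdecr : ∀ᵐ t ∂(volume.restrict (Set.Icc t₁ t₂)),
      ∀ j : Fin n, y' t j * fderiv ℝ V (y t) (EuclideanSpace.single j 1) ≤ 0)
    (i : Fin n) (c : ℝ) (hc : 0 < c)
    (hgrad : ∀ t ∈ Set.Icc t₁ t₂,
      c ≤ |fderiv ℝ V (y t) (EuclideanSpace.single i 1)|) :
    |y t₂ i - y t₁ i| ≤ (1 / c) * (V (y t₁) - V (y t₂)) :=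
  coordinate_displacement_bound_general n V hV y y' t₁ t₂ ht hInt hAC hdecr i c hc hgrad
end
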